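/- Fix vertices u,v and an integer d ≥ 1, and let D be an edge set with |D| ≤ d such that u,v are connected in G−D. Suppose u' is u-clean and v' is v-clean with respect to D, and π_{G−D}(u,v) passes through both u' and v'. Let D* be an edge set with |D*| ≤ d maximizing |π_{G−D'}(u,v)| over all edge sets D' with |D'| ≤ d such that π(u,u') and π(v',v) contain no edge of D' and no vertex of T_u(u') ∪ T_v(v') is incident to an edge of D' (assume u,v are connected in G−D' for all such D'). Let H = { w ∈ V(D*) : both π(u,w) and π(w,v) contain an edge of D }. Then either |π_{G−D}(u,v)| = |π_{G−D*}(u,v)|, or π_{G−D}(u,v) passes through some vertex of H. -/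

import Mathlib

open SimpleGraph

variable {V : Type*}

/-- Total weight of a walk with respect to edge weights `w`. -/
def walkWeight (w : Sym2 V → ℝ) {G : SimpleGraph V} {a b : V} (p : G.Walk a b) : ℝ :=
  (p.edges.map w).sum

/-- `p` is the/a minimum-weight path from `a` to `b` in `G`. -/
def IsShortestPath (w : Sym2 V → ℝ) (G : SimpleGraph V) {a b : V} (p : G.Walk a b) : Prop :=
  p.IsPath ∧ ∀ q : G.Walk a b, q.IsPath → walkWeight w p ≤ walkWeight w q

/-- `Decomposable w G k p` : `p` is the concatenation of at most `k+1` shortest paths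
of `G` interleaved with at most `k` single edges. -/
inductive Decomposable (w : Sym2 V → ℝ) (G : SimpleGraph V) :
    ℕ → ∀ {a b : V}, G.Walk a b → Prop
  | single {a b : V} (k : ℕ) (p : G.Walk a b) (hp : IsShortestPath w G p) :
      Decomposable w G k p
  | cons {a b c d : V} (k : ℕ) (p : G.Walk a b) (h : G.Adj b c) (q : G.Walk c d)
      (hp : IsShortestPath w G p) (hq : Decomposable w G k q) :
      Decomposable w G (k + 1) (p.append (Walk.cons h q))

/-- The rank of a walk `p` in `G`: the least `k` such that `p` is `k`-decomposable. -/
noncomputable def pathRank (w : Sym2 V → ℝ) (G : SimpleGraph V) {a b : V} (p : G.Walk a b) : ℕ :=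
  sInf {k | Decomposable w G k p}

/-!
If `π_{G−D}(u,v)` avoids `D*`, it survives in `G − D*`, so `|π_{G−D*}(u,v)| ≤ |π_{G−D}(u,v)|`;
since `u'`, `v'` are clean, `D` itself competes in the maximisation, and the two lengths agree.
Otherwise pick an edge `e ∈ D*` on `π_{G−D}(u,v)` and an endpoint `x` of `e`. If `π(u,x)`
avoided `D`, then by uniqueness it would be the prefix of `π_{G−D}(u,v)` up to `x`. Admissibility
of `D*` keeps `u'` off `π(u,x)`, so `x` comes before `u'` and `e` lies on the prefix up to `u'`,
which is `π(u,u')` — but `D*` avoids `π(u,u')`. The same argument on the reversed paths shows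
that `π(x,v)` meets `D`.
-/

section ShortestPaths

variable {G H : SimpleGraph V} {w : Sym2 V → ℝ} {a b c x : V}

lemma walkWeight_append (p : G.Walk a b) (q : G.Walk b c) :
    walkWeight w (p.append q) = walkWeight w p + walkWeight w q := by
  simp [walkWeight, Walk.edges_append]

lemma walkWeight_reverse (p : G.Walk a b) : walkWeight w p.reverse = walkWeight w p := by
  simp [walkWeight, Walk.edges_reverse, List.map_reverse]

lemma walkWeight_transfer (p : G.Walk a b) (hp : ∀ e ∈ p.edges, e ∈ H.edgeSet) :
    walkWeight w (p.transfer H hp) = walkWeight w p := by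
  simp [walkWeight, Walk.edges_transfer]

lemma walkWeight_bypass_le [DecidableEq V] (hw : ∀ e ∈ G.edgeSet, 0 ≤ w e) (p : G.Walk a b) :
    walkWeight w p.bypass ≤ walkWeight w p :=
  (p.edges_bypass_sublist_edges.map w).sum_le_sum fun _ hmem ↦ by
    obtain ⟨e, he, rfl⟩ := List.mem_map.mp hmem
    exact hw e (p.edges_subset_edgeSet he)

def HasUniqueShortestPaths (w : Sym2 V → ℝ) (G : SimpleGraph V) : Prop :=
  ∀ (a b : V) (p q : G.Walk a b), IsShortestPath w G p → IsShortestPath w G q → p = q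

namespace IsShortestPath

variable {p : G.Walk a b}

lemma le_walkWeight (hw : ∀ e ∈ G.edgeSet, 0 ≤ w e) (hp : IsShortestPath w G p)
    (q : G.Walk a b) : walkWeight w p ≤ walkWeight w q := by
  classical
  exact (hp.2 q.bypass q.bypass_isPath).trans (walkWeight_bypass_le hw q)

lemma of_append_left (hw : ∀ e ∈ G.edgeSet, 0 ≤ w e) {q : G.Walk b c}
    (h : IsShortestPath w G (p.append q)) : IsShortestPath w G p := by
  refine ⟨h.1.of_append_left, fun r _ ↦ ?_⟩
  have := h.le_walkWeight hw (r.append q)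
  rw [walkWeight_append, walkWeight_append] at this
  linarith

lemma takeUntil [DecidableEq V] (hw : ∀ e ∈ G.edgeSet, 0 ≤ w e) (hp : IsShortestPath w G p)
    (hx : x ∈ p.support) : IsShortestPath w G (p.takeUntil x hx) := by
  rw [← p.take_spec hx] at hp
  exact hp.of_append_left hw

lemma reverse (hp : IsShortestPath w G p) : IsShortestPath w G p.reverse := by
  refine ⟨hp.1.reverse, fun q hq ↦ ?_⟩
  simpa [walkWeight_reverse] using hp.2 q.reverse hq.reverse

lemma toDeleteEdges (hp : IsShortestPath w G p) (s : Set (Sym2 V))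
    (hps : ∀ e ∈ p.edges, e ∉ s) : IsShortestPath w (G.deleteEdges s) (p.toDeleteEdges s hps) := by
  refine ⟨hp.1.transfer _, fun q hq ↦ ?_⟩
  have hq' : ∀ e ∈ q.edges, e ∈ G.edgeSet :=
    fun e he ↦ edgeSet_mono (G.deleteEdges_le s) (q.edges_subset_edgeSet he)
  simpa [walkWeight_transfer] using hp.2 (q.transfer G hq') (hq.transfer hq')

end IsShortestPath

end ShortestPaths

namespace SimpleGraph.Walk

variable {G : SimpleGraph V} [DecidableEq V] {a b c x : V}

lemma mem_support_takeUntil_or_mem_support_takeUntil (p : G.Walk a b) (hx : x ∈ p.support)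
    (hc : c ∈ p.support) :
    x ∈ (p.takeUntil c hc).support ∨ c ∈ (p.takeUntil x hx).support := by
  rcases List.prefix_or_prefix_of_prefix (p.support_takeUntil_prefix_support hx)
      (p.support_takeUntil_prefix_support hc) with h | h
  · exact .inl (h.subset (end_mem_support _))
  · exact .inr (h.subset (end_mem_support _))

lemma IsPath.eq_of_mem_support_takeUntil_of_mem_support_dropUntil {p : G.Walk a b}
    (hp : p.IsPath) (hc : c ∈ p.support) (hx₁ : x ∈ (p.takeUntil c hc).support)
    (hx₂ : x ∈ (p.dropUntil c hc).support) : x = c := by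
  have hnodup := hp.support_nodup
  rw [← p.take_spec hc, support_append] at hnodup
  rw [← cons_tail_support] at hx₂
  rcases List.mem_cons.mp hx₂ with h | h
  · exact h
  · exact absurd h (List.disjoint_of_nodup_append hnodup hx₁)

lemma IsPath.mem_edges_takeUntil {p : G.Walk a b} (hp : p.IsPath) {e : Sym2 V}
    (he : e ∈ p.edges) (hxe : x ∈ e) (hc : c ∈ p.support)
    (hcx : c ∉ (p.takeUntil x (p.mem_support_of_mem_edges he hxe)).support) :
    e ∈ (p.takeUntil c hc).edges := by
  have hx := p.mem_support_of_mem_edges he hxe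
  have hxc := (p.mem_support_takeUntil_or_mem_support_takeUntil hx hc).resolve_right hcx
  rw [← p.take_spec hc, edges_append, List.mem_append] at he
  refine he.resolve_right fun he' ↦ ?_
  obtain rfl := hp.eq_of_mem_support_takeUntil_of_mem_support_dropUntil hc hxc
    ((p.dropUntil c hc).mem_support_of_mem_edges he' hxe)
  exact hcx (end_mem_support _)

end SimpleGraph.Walk

lemma HasUniqueShortestPaths.mem_edges_of_notMem_support {H : SimpleGraph V} {w : Sym2 V → ℝ}
    {a b c x : V} (hw : ∀ e ∈ H.edgeSet, 0 ≤ w e) (huniq : HasUniqueShortestPaths w H)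
    {P : H.Walk a b} (hP : IsShortestPath w H P) {e : Sym2 V} (he : e ∈ P.edges) (hxe : x ∈ e)
    (hc : c ∈ P.support) {p : H.Walk a x} (hp : IsShortestPath w H p) (hcp : c ∉ p.support)
    {q : H.Walk a c} (hq : IsShortestPath w H q) : e ∈ q.edges := by
  classical
  have hx := P.mem_support_of_mem_edges he hxe
  rw [huniq _ _ p _ hp (hP.takeUntil hw hx)] at hcp
  rw [huniq _ _ q _ hq (hP.takeUntil hw hc)]
  exact hP.1.mem_edges_takeUntil he hxe hc hcp

theorem stmt6_general (G : SimpleGraph V) (w : Sym2 V → ℝ)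
    (hw : ∀ e ∈ G.edgeSet, 0 < w e)
    -- shortest paths in G, assumed unique (this also makes the tree T_u well defined:
    -- T_u(x) is the set of vertices z with x on π(u,z))
    (πG : ∀ a b : V, G.Walk a b) (hπG : ∀ a b : V, IsShortestPath w G (πG a b))
    (huniqAll : ∀ (D' : Set (Sym2 V)) (a b : V) (p q : (G.deleteEdges D').Walk a b),
      IsShortestPath w (G.deleteEdges D') p → IsShortestPath w (G.deleteEdges D') q → p = q)
    (u v u' v' : V) (d : ℕ)
    (D : Finset (Sym2 V)) (hDcard : D.card ≤ d)
    -- π_{G−D}(u,v) (so u, v are connected in G − D)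
    (PD : (G.deleteEdges ↑D).Walk u v) (hPD : IsShortestPath w (G.deleteEdges ↑D) PD)
    -- u' is u-clean: π(u,u') contains no edge of D, and no vertex of T_u(u') is incident
    -- to an edge of D
    (hu'clean : (∀ e ∈ (πG u u').edges, e ∉ D) ∧
      ∀ x : V, u' ∈ (πG u x).support → ∀ e ∈ D, x ∉ e)
    -- v' is v-clean
    (hv'clean : (∀ e ∈ (πG v' v).edges, e ∉ D) ∧
      ∀ x : V, v' ∈ (πG x v).support → ∀ e ∈ D, x ∉ e)
    -- π_{G−D}(u,v) passes through u' and v'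
    (hu'P : u' ∈ PD.support) (hv'P : v' ∈ PD.support)
    (Dstar : Finset (Sym2 V))
    -- Dstar satisfies condition (α)
    (hDstarcond : (∀ e ∈ (πG u u').edges, e ∉ Dstar) ∧ (∀ e ∈ (πG v' v).edges, e ∉ Dstar) ∧
      ∀ x : V, (u' ∈ (πG u x).support ∨ v' ∈ (πG x v).support) → ∀ e ∈ Dstar, x ∉ e)
    -- π_{G−Dstar}(u,v)
    (PDstar : (G.deleteEdges ↑Dstar).Walk u v)
    (hPDstar : IsShortestPath w (G.deleteEdges ↑Dstar) PDstar)
    -- Dstar maximizes |π_{G−D'}(u,v)| over all D' with |D'| ≤ d satisfying (α)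
    (hmax : ∀ D' : Finset (Sym2 V), D'.card ≤ d →
      (∀ e ∈ (πG u u').edges, e ∉ D') → (∀ e ∈ (πG v' v).edges, e ∉ D') →
      (∀ x : V, (u' ∈ (πG u x).support ∨ v' ∈ (πG x v).support) → ∀ e ∈ D', x ∉ e) →
      ∀ Q : (G.deleteEdges ↑D').Walk u v, IsShortestPath w (G.deleteEdges ↑D') Q →
        walkWeight w Q ≤ walkWeight w PDstar) :
    walkWeight w PD = walkWeight w PDstar ∨
      ∃ x ∈ PD.support, (∃ e ∈ Dstar, x ∈ e) ∧
        (∃ e ∈ (πG u x).edges, e ∈ D) ∧ (∃ e ∈ (πG x v).edges, e ∈ D) := by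
  classical
  have hwD : ∀ e ∈ (G.deleteEdges (D : Set (Sym2 V))).edgeSet, 0 ≤ w e :=
    fun e he ↦ (hw e (edgeSet_mono (G.deleteEdges_le _) he)).le
  have huniqD : HasUniqueShortestPaths w (G.deleteEdges D) := huniqAll D
  by_cases hDisj : ∀ e ∈ PD.edges, e ∉ Dstar
  · have hPD_edges : ∀ e ∈ PD.edges, e ∈ (G.deleteEdges (Dstar : Set (Sym2 V))).edgeSet :=
      fun e he ↦ by
        rw [edgeSet_deleteEdges]
        exact ⟨edgeSet_mono (G.deleteEdges_le _) (PD.edges_subset_edgeSet he), hDisj e he⟩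
    have hDadmissible : ∀ x : V, (u' ∈ (πG u x).support ∨ v' ∈ (πG x v).support) → ∀ e ∈ D, x ∉ e :=
      fun x hx ↦ hx.elim (hu'clean.2 x) (hv'clean.2 x)
    refine .inl (le_antisymm (hmax D hDcard hu'clean.1 hv'clean.1 hDadmissible PD hPD) ?_)
    simpa [walkWeight_transfer] using
      hPDstar.2 (PD.transfer _ hPD_edges) (hPD.1.transfer hPD_edges)
  push Not at hDisj
  obtain ⟨e, hePD, heDstar⟩ := hDisj
  obtain ⟨x, hxe⟩ : ∃ x, x ∈ e := ⟨_, e.out_fst_mem⟩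
  have hxα := fun hx ↦ hDstarcond.2.2 x hx e heDstar hxe
  refine .inr ⟨x, PD.mem_support_of_mem_edges hePD hxe, ⟨e, heDstar, hxe⟩, ?_, ?_⟩
  · by_contra! hux
    refine hDstarcond.1 e ?_ heDstar
    simpa using huniqD.mem_edges_of_notMem_support hwD hPD hePD hxe hu'P
      ((hπG u x).toDeleteEdges _ hux) (by simpa using fun h ↦ hxα (.inl h))
      ((hπG u u').toDeleteEdges _ hu'clean.1)
  · by_contra! hxv
    refine hDstarcond.2.1 e ?_ heDstar
    simpa using huniqD.mem_edges_of_notMem_support hwD hPD.reverse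
      (by simpa using hePD) hxe (by simpa using hv'P)
      ((hπG x v).toDeleteEdges _ hxv).reverse (by simpa using fun h ↦ hxα (.inr h))
      ((hπG v' v).toDeleteEdges _ hv'clean.1).reverse

/-- Case I, Claim 4.2.  Suppose `u'` is `u`-clean and `v'` is `v`-clean
w.r.t. `D`, and `π_{G−D}(u,v)` passes through both `u'` and `v'`.  Let `Dstar` (with
`|Dstar| ≤ d`) maximize `|π_{G−D'}(u,v)|` over all edge sets `D'` with `|D'| ≤ d` such that
`π(u,u')` and `π(v',v)` contain no edge of `D'` and no vertex of `T_u(u') ∪ T_v(v')` is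
incident to an edge of `D'`.  With `H = {x ∈ V(Dstar) : both π(u,x) and π(x,v) contain an
edge of D}`, either `|π_{G−D}(u,v)| = |π_{G−Dstar}(u,v)|` or `π_{G−D}(u,v)` passes through
some vertex of `H`. -/
theorem stmt6 [Fintype V] [DecidableEq V] (G : SimpleGraph V) (w : Sym2 V → ℝ)
    (hw : ∀ e ∈ G.edgeSet, 0 < w e)
    -- shortest paths in G, assumed unique (this also makes the tree T_u well defined:
    -- T_u(x) is the set of vertices z with x on π(u,z))
    (πG : ∀ a b : V, G.Walk a b) (hπG : ∀ a b : V, IsShortestPath w G (πG a b))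
    (huniqG : ∀ (a b : V) (p q : G.Walk a b),
      IsShortestPath w G p → IsShortestPath w G q → p = q)
    (huniqAll : ∀ (D' : Set (Sym2 V)) (a b : V) (p q : (G.deleteEdges D').Walk a b),
      IsShortestPath w (G.deleteEdges D') p → IsShortestPath w (G.deleteEdges D') q → p = q)
    (u v u' v' : V) (d : ℕ) (hd : 1 ≤ d)
    (D : Finset (Sym2 V)) (hDsub : ↑D ⊆ G.edgeSet) (hDcard : D.card ≤ d)
    -- π_{G−D}(u,v) (so u, v are connected in G − D)
    (PD : (G.deleteEdges ↑D).Walk u v) (hPD : IsShortestPath w (G.deleteEdges ↑D) PD)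
    -- u' is u-clean: π(u,u') contains no edge of D, and no vertex of T_u(u') is incident
    -- to an edge of D
    (hu'clean : (∀ e ∈ (πG u u').edges, e ∉ D) ∧
      ∀ x : V, u' ∈ (πG u x).support → ∀ e ∈ D, x ∉ e)
    -- v' is v-clean
    (hv'clean : (∀ e ∈ (πG v' v).edges, e ∉ D) ∧
      ∀ x : V, v' ∈ (πG x v).support → ∀ e ∈ D, x ∉ e)
    -- π_{G−D}(u,v) passes through u' and v'
    (hu'P : u' ∈ PD.support) (hv'P : v' ∈ PD.support)
    (Dstar : Finset (Sym2 V)) (hDstarcard : Dstar.card ≤ d)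
    -- Dstar satisfies condition (α)
    (hDstarcond : (∀ e ∈ (πG u u').edges, e ∉ Dstar) ∧ (∀ e ∈ (πG v' v).edges, e ∉ Dstar) ∧
      ∀ x : V, (u' ∈ (πG u x).support ∨ v' ∈ (πG x v).support) → ∀ e ∈ Dstar, x ∉ e)
    -- u and v are connected in G − D' for every D' with |D'| ≤ d satisfying (α)
    (hconn : ∀ D' : Finset (Sym2 V), D'.card ≤ d →
      (∀ e ∈ (πG u u').edges, e ∉ D') → (∀ e ∈ (πG v' v).edges, e ∉ D') →
      (∀ x : V, (u' ∈ (πG u x).support ∨ v' ∈ (πG x v).support) → ∀ e ∈ D', x ∉ e) →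
      (G.deleteEdges ↑D').Reachable u v)
    -- π_{G−Dstar}(u,v)
    (PDstar : (G.deleteEdges ↑Dstar).Walk u v)
    (hPDstar : IsShortestPath w (G.deleteEdges ↑Dstar) PDstar)
    -- Dstar maximizes |π_{G−D'}(u,v)| over all D' with |D'| ≤ d satisfying (α)
    (hmax : ∀ D' : Finset (Sym2 V), D'.card ≤ d →
      (∀ e ∈ (πG u u').edges, e ∉ D') → (∀ e ∈ (πG v' v).edges, e ∉ D') →
      (∀ x : V, (u' ∈ (πG u x).support ∨ v' ∈ (πG x v).support) → ∀ e ∈ D', x ∉ e) →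
      ∀ Q : (G.deleteEdges ↑D').Walk u v, IsShortestPath w (G.deleteEdges ↑D') Q →
        walkWeight w Q ≤ walkWeight w PDstar) :
    walkWeight w PD = walkWeight w PDstar ∨
      ∃ x ∈ PD.support, (∃ e ∈ Dstar, x ∈ e) ∧
        (∃ e ∈ (πG u x).edges, e ∈ D) ∧ (∃ e ∈ (πG x v).edges, e ∈ D) :=
  stmt6_general G w hw πG hπG huniqAll u v u' v' d D hDcard PD hPD hu'clean hv'clean hu'P hv'P Dstar
    hDstarcond PDstar hPDstar hmax
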